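/- (Reduction theorem) Let {ψ(θ,S), θ,S ∈ T_0} be a biadmissible family of nonnegative integrable random variables. For θ ∈ T_0 set u_1(θ) = ess sup_{τ_1 ∈ T_θ} E[ψ(τ_1, θ) | F_θ], u_2(θ) = ess sup_{τ_2 ∈ T_θ} E[ψ(θ, τ_2) | F_θ], and φ(θ) = max(u_1(θ), u_2(θ)). Then for every stopping time S ∈ T_0, the double-stopping value function v(S) = ess sup_{τ_1,τ_2 ∈ T_S} E[ψ(τ_1,τ_2) | F_S] coincides almost surely with the single-stopping value function u(S) = ess sup_{θ ∈ T_S} E[φ(θ) | F_S]. -/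

import Mathlib

open MeasureTheory Filter Set Topology

variable {Ω : Type*}

/-- `τ` belongs to `T_0`: it is a stopping time of `𝓕` with values in `[0, T]`. -/
def MemT0 {m0 : MeasurableSpace Ω} (𝓕 : MeasureTheory.Filtration ℝ m0) (T : ℝ)
    (τ : Ω → ℝ) : Prop :=
  MeasureTheory.IsStoppingTime 𝓕 (fun ω => (τ ω : WithTop ℝ)) ∧ ∀ ω, τ ω ∈ Set.Icc (0 : ℝ) T

/-- `v` is an essential supremum of the family `f i`, `i` ranging over `{i | P i}`:
it dominates every member a.s. and is a.s. below any other a.s. upper bound. -/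
def IsEssSupFam {m0 : MeasurableSpace Ω} (μ : MeasureTheory.Measure Ω) {ι : Sort*}
    (P : ι → Prop) (f : ι → Ω → ℝ) (v : Ω → ℝ) : Prop :=
  (∀ i, P i → f i ≤ᵐ[μ] v) ∧ ∀ w : Ω → ℝ, (∀ i, P i → f i ≤ᵐ[μ] w) → v ≤ᵐ[μ] w

/-- `v` is an essential infimum of the family `f i`, `i` ranging over `{i | P i}`. -/
def IsEssInfFam {m0 : MeasurableSpace Ω} (μ : MeasureTheory.Measure Ω) {ι : Sort*}
    (P : ι → Prop) (f : ι → Ω → ℝ) (v : Ω → ℝ) : Prop :=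
  (∀ i, P i → v ≤ᵐ[μ] f i) ∧ ∀ w : Ω → ℝ, (∀ i, P i → w ≤ᵐ[μ] f i) → w ≤ᵐ[μ] v

/-- An admissible family of nonnegative random variables indexed by the stopping
times in `T_0`: `φ τ` is a nonnegative `F_τ`-measurable random variable, and
`φ τ = φ τ'` a.s. on `{τ = τ'}`. -/
def Admissible {m0 : MeasurableSpace Ω} (𝓕 : MeasureTheory.Filtration ℝ m0) (T : ℝ)
    (μ : MeasureTheory.Measure Ω) (φ : (Ω → ℝ) → Ω → ℝ) : Prop :=
  (∀ τ (hτ : MemT0 𝓕 T τ),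
      Measurable[hτ.1.measurableSpace] (φ τ) ∧ ∀ ω, 0 ≤ φ τ ω) ∧
  ∀ τ τ', MemT0 𝓕 T τ → MemT0 𝓕 T τ' →
    ∀ᵐ ω ∂μ, τ ω = τ' ω → φ τ ω = φ τ' ω

/-- An a.e. variant of admissibility (for families defined only up to a.s. equality,
such as value-function families): `φ τ` is a.s. nonnegative and a.s. equal to some
`F_τ`-measurable random variable, and `φ τ = φ τ'` a.s. on `{τ = τ'}`. -/
def AdmissibleAE {m0 : MeasurableSpace Ω} (𝓕 : MeasureTheory.Filtration ℝ m0) (T : ℝ)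
    (μ : MeasureTheory.Measure Ω) (φ : (Ω → ℝ) → Ω → ℝ) : Prop :=
  (∀ τ (hτ : MemT0 𝓕 T τ),
      (∀ᵐ ω ∂μ, 0 ≤ φ τ ω) ∧
      ∃ w : Ω → ℝ, Measurable[hτ.1.measurableSpace] w ∧ φ τ =ᵐ[μ] w) ∧
  ∀ τ τ', MemT0 𝓕 T τ → MemT0 𝓕 T τ' →
    ∀ᵐ ω ∂μ, τ ω = τ' ω → φ τ ω = φ τ' ω

/-- A biadmissible family: `ψ τ S` is a nonnegative `F_{τ ∨ S}`-measurable random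
variable, and `ψ τ S = ψ τ' S'` a.s. on `{τ = τ'} ∩ {S = S'}`. -/
def Biadmissible {m0 : MeasurableSpace Ω} (𝓕 : MeasureTheory.Filtration ℝ m0) (T : ℝ)
    (μ : MeasureTheory.Measure Ω) (ψ : (Ω → ℝ) → (Ω → ℝ) → Ω → ℝ) : Prop :=
  (∀ τ S (hτ : MemT0 𝓕 T τ) (hS : MemT0 𝓕 T S),
      Measurable[(hτ.1.max hS.1).measurableSpace] (ψ τ S) ∧ ∀ ω, 0 ≤ ψ τ S ω) ∧
  ∀ τ τ' S S', MemT0 𝓕 T τ → MemT0 𝓕 T τ' → MemT0 𝓕 T S → MemT0 𝓕 T S' →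
    ∀ᵐ ω ∂μ, τ ω = τ' ω → S ω = S' ω → ψ τ S ω = ψ τ' S' ω

/-- `θn ↓ θ` a.s.: the sequence is a.s. nonincreasing and converges a.s. to `θ`. -/
def DownAS {m0 : MeasurableSpace Ω} (μ : MeasureTheory.Measure Ω)
    (θn : ℕ → Ω → ℝ) (θ : Ω → ℝ) : Prop :=
  ∀ᵐ ω ∂μ, (∀ n, θn (n + 1) ω ≤ θn n ω) ∧
    Filter.Tendsto (fun n => θn n ω) Filter.atTop (nhds (θ ω))

/-- `θn ↑ θ` a.s.: the sequence is a.s. nondecreasing and converges a.s. to `θ`. -/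
def UpAS {m0 : MeasurableSpace Ω} (μ : MeasureTheory.Measure Ω)
    (θn : ℕ → Ω → ℝ) (θ : Ω → ℝ) : Prop :=
  ∀ᵐ ω ∂μ, (∀ n, θn n ω ≤ θn (n + 1) ω) ∧
    Filter.Tendsto (fun n => θn n ω) Filter.atTop (nhds (θ ω))

/-- The family `φ` is right continuous along stopping times in expectation. -/
def RCE {m0 : MeasurableSpace Ω} (𝓕 : MeasureTheory.Filtration ℝ m0) (T : ℝ)
    (μ : MeasureTheory.Measure Ω) (φ : (Ω → ℝ) → Ω → ℝ) : Prop :=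
  ∀ θ, MemT0 𝓕 T θ → ∀ θn : ℕ → Ω → ℝ, (∀ n, MemT0 𝓕 T (θn n)) → DownAS μ θn θ →
    Filter.Tendsto (fun n => ∫ ω, φ (θn n) ω ∂μ) Filter.atTop (nhds (∫ ω, φ θ ω ∂μ))

/-- The family `φ` is left continuous along stopping times in expectation. -/
def LCE {m0 : MeasurableSpace Ω} (𝓕 : MeasureTheory.Filtration ℝ m0) (T : ℝ)
    (μ : MeasureTheory.Measure Ω) (φ : (Ω → ℝ) → Ω → ℝ) : Prop :=
  ∀ θ, MemT0 𝓕 T θ → ∀ θn : ℕ → Ω → ℝ, (∀ n, MemT0 𝓕 T (θn n)) → UpAS μ θn θ →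
    Filter.Tendsto (fun n => ∫ ω, φ (θn n) ω ∂μ) Filter.atTop (nhds (∫ ω, φ θ ω ∂μ))

/-- The biadmissible family `ψ` is uniformly right continuous in expectation along
stopping times: for `S_n ↓ S` a.s. (all in `T_0`), the expectation of the essential
supremum over `θ ∈ T_0` of `|ψ(θ, S) - ψ(θ, S_n)|` (resp. `|ψ(S, θ) - ψ(S_n, θ)|`)
tends to `0`. -/
def URCE {m0 : MeasurableSpace Ω} (𝓕 : MeasureTheory.Filtration ℝ m0) (T : ℝ)
    (μ : MeasureTheory.Measure Ω) (ψ : (Ω → ℝ) → (Ω → ℝ) → Ω → ℝ) : Prop :=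
  ∀ S, MemT0 𝓕 T S → ∀ Sn : ℕ → Ω → ℝ, (∀ n, MemT0 𝓕 T (Sn n)) → DownAS μ Sn S →
    (∀ D : ℕ → Ω → ℝ,
      (∀ n, IsEssSupFam μ (MemT0 𝓕 T) (fun θ ω => |ψ θ S ω - ψ θ (Sn n) ω|) (D n)) →
      Filter.Tendsto (fun n => ∫ ω, D n ω ∂μ) Filter.atTop (nhds 0)) ∧
    ∀ D : ℕ → Ω → ℝ,
      (∀ n, IsEssSupFam μ (MemT0 𝓕 T) (fun θ ω => |ψ S θ ω - ψ (Sn n) θ ω|) (D n)) →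
      Filter.Tendsto (fun n => ∫ ω, D n ω ∂μ) Filter.atTop (nhds 0)

/-- The biadmissible family `ψ` is uniformly left continuous in expectation along
stopping times. -/
def ULCE {m0 : MeasurableSpace Ω} (𝓕 : MeasureTheory.Filtration ℝ m0) (T : ℝ)
    (μ : MeasureTheory.Measure Ω) (ψ : (Ω → ℝ) → (Ω → ℝ) → Ω → ℝ) : Prop :=
  ∀ S, MemT0 𝓕 T S → ∀ Sn : ℕ → Ω → ℝ, (∀ n, MemT0 𝓕 T (Sn n)) → UpAS μ Sn S →
    (∀ D : ℕ → Ω → ℝ,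
      (∀ n, IsEssSupFam μ (MemT0 𝓕 T) (fun θ ω => |ψ θ S ω - ψ θ (Sn n) ω|) (D n)) →
      Filter.Tendsto (fun n => ∫ ω, D n ω ∂μ) Filter.atTop (nhds 0)) ∧
    ∀ D : ℕ → Ω → ℝ,
      (∀ n, IsEssSupFam μ (MemT0 𝓕 T) (fun θ ω => |ψ S θ ω - ψ (Sn n) θ ω|) (D n)) →
      Filter.Tendsto (fun n => ∫ ω, D n ω ∂μ) Filter.atTop (nhds 0)

/-!
For `v ≤ u`: given `τ₁, τ₂ ≥ S`, put `θ = τ₁ ∧ τ₂`. On `{τ₂ ≤ τ₁} ∈ F_θ` the reward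
`ψ(τ₁, τ₂)` equals `ψ(τ₁, θ)`, and on the complement it equals `ψ(θ, τ₂)`; hence
`E[ψ(τ₁, τ₂) | F_θ] ≤ max (u₁ θ) (u₂ θ) = φ θ`, and conditioning on `F_S` gives
`E[ψ(τ₁, τ₂) | F_S] ≤ u S`.

For `u ≤ v`: the families defining `u₁ θ` and `u₂ θ` are upward directed (paste two stopping
times along an `F_θ`-measurable set), so each essential supremum is the a.s. increasing limit of
`E[ψ(τₙ, θ) | F_θ]`, resp. `E[ψ(θ, σₙ) | F_θ]`. Pasting the pairs `(τₙ, θ)` and `(θ, σₙ)` along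
`{u₂ θ ≤ u₁ θ}` yields admissible pairs whose conditional rewards converge to `φ θ`, and
conditional dominated convergence gives `E[φ θ | F_S] ≤ v S`. Since `F_0` contains the null sets,
`θ ≥ S` a.s. may be replaced by `θ ∨ S` without changing `F_θ`, `u₁ θ` or `u₂ θ`.
-/

section EssSup

variable {m0 : MeasurableSpace Ω} {μ : Measure Ω}

lemma IsEssSupFam.ae_eq {ι : Sort*} {P : ι → Prop} {f : ι → Ω → ℝ} {v w : Ω → ℝ}
    (hv : IsEssSupFam μ P f v) (hw : IsEssSupFam μ P f w) : v =ᵐ[μ] w :=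
  (hv.2 w hw.1).antisymm (hw.2 v hv.1)

lemma IsEssSupFam.of_cofinal {ι κ : Sort*} {P : ι → Prop} {Q : κ → Prop} {f : ι → Ω → ℝ}
    {g : κ → Ω → ℝ} {v : Ω → ℝ} (hv : IsEssSupFam μ P f v)
    (hPQ : ∀ i, P i → ∃ j, Q j ∧ f i ≤ᵐ[μ] g j) (hQP : ∀ j, Q j → ∃ i, P i ∧ g j ≤ᵐ[μ] f i) :
    IsEssSupFam μ Q g v := by
  refine ⟨fun j hj => ?_, fun w hw => hv.2 w fun i hi => ?_⟩
  · obtain ⟨i, hi, hle⟩ := hQP j hj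
    exact hle.trans (hv.1 i hi)
  · obtain ⟨j, hj, hle⟩ := hPQ i hi
    exact hle.trans (hw j hj)

lemma IsEssSupFam.aestronglyMeasurable {ι : Sort*} {P : ι → Prop} {f : ι → Ω → ℝ}
    {v : Ω → ℝ} {m : MeasurableSpace Ω} (hm : m ≤ m0) [SigmaFinite (μ.trim hm)]
    (hv : IsEssSupFam μ P f v) (hvi : Integrable v μ)
    (hfm : ∀ i, P i → StronglyMeasurable[m] (f i)) (hfi : ∀ i, P i → Integrable (f i) μ) :
    AEStronglyMeasurable[m] v μ := by
  have hle : v ≤ᵐ[μ] μ[v|m] := hv.2 _ fun i hi =>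
    (EventuallyEq.of_eq (condExp_of_stronglyMeasurable hm (hfm i hi) (hfi i hi))).symm.le.trans
      (condExp_mono (hfi i hi) hvi (hv.1 i hi))
  exact stronglyMeasurable_condExp.aestronglyMeasurable.congr
    ((integral_eq_iff_of_ae_le hvi integrable_condExp hle).1 (integral_condExp hm).symm).symm

lemma exists_measurableSet_ae_ge_on_le_off {m : MeasurableSpace Ω} {u₁ u₂ : Ω → ℝ}
    (h₁ : AEStronglyMeasurable[m] u₁ μ) (h₂ : AEStronglyMeasurable[m] u₂ μ) :
    ∃ A, MeasurableSet[m] A ∧ ∀ᵐ ω ∂μ, (ω ∈ A → u₂ ω ≤ u₁ ω) ∧ (ω ∉ A → u₁ ω ≤ u₂ ω) := by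
  refine ⟨{ω | h₂.mk u₂ ω ≤ h₁.mk u₁ ω}, measurableSet_le h₂.stronglyMeasurable_mk.measurable
    h₁.stronglyMeasurable_mk.measurable, ?_⟩
  filter_upwards [h₁.ae_eq_mk, h₂.ae_eq_mk] with ω e₁ e₂
  rw [← e₁, ← e₂]
  exact ⟨id, fun h => (not_le.1 h).le⟩

end EssSup

section EssSupSeq

variable {m0 : MeasurableSpace Ω} {μ : Measure Ω} {ι : Type*} {P : ι → Prop} {f : ι → Ω → ℝ}

lemma exists_monotone_tendsto_sSup_integral (hne : ∃ i, P i)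
    (hfi : ∀ i, P i → Integrable (f i) μ)
    (hdir : ∀ i j, P i → P j → ∃ k, P k ∧ f i ≤ᵐ[μ] f k ∧ f j ≤ᵐ[μ] f k)
    (hbdd : BddAbove ((fun i => ∫ ω, f i ω ∂μ) '' {i | P i})) :
    ∃ g : ℕ → ι, (∀ n, P (g n)) ∧ (∀ᵐ ω ∂μ, Monotone fun n => f (g n) ω) ∧
      Tendsto (fun n => ∫ ω, f (g n) ω ∂μ) atTop
        (𝓝 (sSup ((fun i => ∫ ω, f i ω ∂μ) '' {i | P i}))) := by
  obtain ⟨i₀, hi₀⟩ := hne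
  obtain ⟨a, -, ha, haS⟩ := exists_seq_tendsto_sSup (Set.Nonempty.image _ ⟨i₀, hi₀⟩) hbdd
  choose j hjP hja using haS
  choose! k hkP hki hkj using hdir
  let g : ℕ → ι := fun n => Nat.rec (j 0) (fun n gn => k gn (j (n + 1))) n
  have hgP : ∀ n, P (g n) := by
    intro n
    induction n with
    | zero => exact hjP 0
    | succ n ih => exact hkP _ _ ih (hjP _)
  have hjg : ∀ n, f (j n) ≤ᵐ[μ] f (g n) := by
    rintro (_ | n)
    · exact EventuallyLE.refl _ _
    · exact hkj _ _ (hgP n) (hjP _)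
  refine ⟨g, hgP, ?_, ?_⟩
  · filter_upwards [ae_all_iff.2 fun n => hki _ _ (hgP n) (hjP (n + 1))] with ω h
    exact monotone_nat_of_le_succ h
  · refine tendsto_of_tendsto_of_tendsto_of_le_of_le ha tendsto_const_nhds (fun n => ?_)
      (fun n => le_csSup hbdd ⟨g n, hgP n, rfl⟩)
    rw [← hja n]
    exact integral_mono_ae (hfi _ (hjP n)) (hfi _ (hgP n)) (hjg n)

lemma IsEssSupFam.exists_monotone_tendsto {v : Ω → ℝ} (hv : IsEssSupFam μ P f v)
    (hvi : Integrable v μ) (hne : ∃ i, P i) (hfi : ∀ i, P i → Integrable (f i) μ)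
    (hdir : ∀ i j, P i → P j → ∃ k, P k ∧ f i ≤ᵐ[μ] f k ∧ f j ≤ᵐ[μ] f k) :
    ∃ g : ℕ → ι, (∀ n, P (g n)) ∧
      ∀ᵐ ω ∂μ, Monotone (fun n => f (g n) ω) ∧ Tendsto (fun n => f (g n) ω) atTop (𝓝 (v ω)) := by
  set c := sSup ((fun i => ∫ ω, f i ω ∂μ) '' {i | P i})
  have hbdd : BddAbove ((fun i => ∫ ω, f i ω ∂μ) '' {i | P i}) := by
    refine ⟨∫ ω, v ω ∂μ, ?_⟩
    rintro _ ⟨i, hi, rfl⟩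
    exact integral_mono_ae (hfi i hi) hvi (hv.1 i hi)
  have hle_c : ∀ i, P i → ∫ ω, f i ω ∂μ ≤ c := fun i hi => le_csSup hbdd ⟨i, hi, rfl⟩
  obtain ⟨g, hgP, hmono, hlim⟩ := exists_monotone_tendsto_sSup_integral hne hfi hdir hbdd
  have hgv : ∀ᵐ ω ∂μ, ∀ n, f (g n) ω ≤ v ω := ae_all_iff.2 fun n => hv.1 _ (hgP n)
  set F : Ω → ℝ := fun ω => ⨆ n, f (g n) ω
  have hF : ∀ᵐ ω ∂μ, Tendsto (fun n => f (g n) ω) atTop (𝓝 (F ω)) := by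
    filter_upwards [hmono, hgv] with ω hm hb
    exact tendsto_atTop_ciSup hm ⟨v ω, by rintro _ ⟨n, rfl⟩; exact hb n⟩
  have hFv : F ≤ᵐ[μ] v := by
    filter_upwards [hF, hgv] with ω h hb using le_of_tendsto' h hb
  have hgF : f (g 0) ≤ᵐ[μ] F := by
    filter_upwards [hmono, hF] with ω hm h using hm.ge_of_tendsto h 0
  have hFi : Integrable F μ := by
    refine ((hfi _ (hgP 0)).abs.add hvi.abs).mono'
      (aestronglyMeasurable_of_tendsto_ae atTop (fun n => (hfi _ (hgP n)).1) hF) ?_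
    filter_upwards [hgF, hFv] with ω h0 h1
    rw [Real.norm_eq_abs, abs_le, Pi.add_apply]
    constructor <;> linarith [neg_abs_le (f (g 0) ω), le_abs_self (v ω), abs_nonneg (v ω),
      abs_nonneg (f (g 0) ω)]
  have hintF : ∫ ω, F ω ∂μ = c := tendsto_nhds_unique
    (integral_tendsto_of_tendsto_of_monotone (fun n => hfi _ (hgP n)) hFi hmono hF) hlim
  -- every member is below `F`: otherwise `max (f i) F` would have integral above `c`
  have hupper : ∀ i, P i → f i ≤ᵐ[μ] F := by
    intro i hi
    have hmaxi : Integrable (fun ω => max (f i ω) (F ω)) μ := (hfi i hi).sup hFi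
    have hlim' : Tendsto (fun n => ∫ ω, max (f i ω) (f (g n) ω) ∂μ) atTop
        (𝓝 (∫ ω, max (f i ω) (F ω) ∂μ)) := by
      refine integral_tendsto_of_tendsto_of_monotone (fun n => (hfi i hi).sup (hfi _ (hgP n)))
        hmaxi ?_ ?_
      · filter_upwards [hmono] with ω h n m hnm using max_le_max le_rfl (h hnm)
      · filter_upwards [hF] with ω h using tendsto_const_nhds.max h
    have hle : ∫ ω, max (f i ω) (F ω) ∂μ ≤ ∫ ω, F ω ∂μ := by
      rw [hintF]
      refine le_of_tendsto' hlim' fun n => ?_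
      obtain ⟨k, hk, hik, hgk⟩ := hdir i (g n) hi (hgP n)
      refine (integral_mono_ae ((hfi i hi).sup (hfi _ (hgP n))) (hfi k hk) ?_).trans (hle_c k hk)
      filter_upwards [hik, hgk] with ω h₁ h₂ using max_le h₁ h₂
    have heq : F =ᵐ[μ] fun ω => max (f i ω) (F ω) :=
      (integral_eq_iff_of_ae_le hFi hmaxi (ae_of_all _ fun ω => le_max_right _ _)).1
        (le_antisymm (integral_mono hFi hmaxi fun ω => le_max_right _ _) hle)
    filter_upwards [heq] with ω h
    exact h ▸ le_max_left _ _
  refine ⟨g, hgP, ?_⟩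
  filter_upwards [hmono, hF, hFv, hv.2 F hupper] with ω hm h h₁ h₂
  exact ⟨hm, le_antisymm h₁ h₂ ▸ h⟩

end EssSupSeq

section CondExp

variable {m m0 : MeasurableSpace Ω} {μ : Measure Ω}

lemma condExp_ae_eq_of_ae_eq_on {f g : Ω → ℝ} (hf : Integrable f μ) (hg : Integrable g μ)
    {s : Set Ω} (hs : MeasurableSet[m] s) (hfg : ∀ᵐ ω ∂μ, ω ∈ s → f ω = g ω) :
    ∀ᵐ ω ∂μ, ω ∈ s → μ[f|m] ω = μ[g|m] ω := by
  have hind : s.indicator f =ᵐ[μ] s.indicator g := by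
    filter_upwards [hfg] with ω h
    by_cases hω : ω ∈ s <;> simp [hω, h]
  filter_upwards [(condExp_indicator hf hs).symm.trans
    ((condExp_congr_ae hind).trans (condExp_indicator hg hs))] with ω h hω
  simpa [hω] using h

lemma condExp_ae_eq_piecewise {f g h : Ω → ℝ} (hf : Integrable f μ) (hg : Integrable g μ)
    (hh : Integrable h μ) {s : Set Ω} [DecidablePred (· ∈ s)] (hs : MeasurableSet[m] s)
    (hfg : ∀ᵐ ω ∂μ, ω ∈ s → f ω = g ω) (hfh : ∀ᵐ ω ∂μ, ω ∉ s → f ω = h ω) :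
    μ[f|m] =ᵐ[μ] s.piecewise (μ[g|m]) (μ[h|m]) := by
  filter_upwards [condExp_ae_eq_of_ae_eq_on hf hg hs hfg,
    condExp_ae_eq_of_ae_eq_on hf hh hs.compl hfh] with ω h₁ h₂
  by_cases hω : ω ∈ s
  · simp [hω, h₁ hω]
  · simp [hω, h₂ hω]

lemma condExp_ae_le_of_tendsto_of_dominated (hm : m ≤ m0) [SigmaFinite (μ.trim hm)]
    {fs : ℕ → Ω → ℝ} {f v : Ω → ℝ} (bound : Ω → ℝ) (hfs_meas : ∀ n, AEStronglyMeasurable (fs n) μ)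
    (hbound : Integrable bound μ) (hfs_bound : ∀ n, ∀ᵐ ω ∂μ, ‖fs n ω‖ ≤ bound ω)
    (hfs : ∀ᵐ ω ∂μ, Tendsto (fun n => fs n ω) atTop (𝓝 (f ω)))
    (hle : ∀ n, μ[fs n|m] ≤ᵐ[μ] v) : μ[f|m] ≤ᵐ[μ] v := by
  obtain ⟨ns, -, hns⟩ := (tendstoInMeasure_of_tendsto_Lp
    (tendsto_condExpL1_of_dominated_convergence hm bound hfs_meas hbound hfs_bound
      hfs)).exists_seq_tendsto_ae
  filter_upwards [hns, condExp_ae_eq_condExpL1 hm f,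
    ae_all_iff.2 fun n => condExp_ae_eq_condExpL1 hm (fs n), ae_all_iff.2 hle]
    with ω hlim hf hfs' hle'
  rw [hf]
  exact le_of_tendsto' hlim fun k => hfs' (ns k) ▸ hle' (ns k)

end CondExp

section StoppingTime

variable {m0 : MeasurableSpace Ω} {ι : Type*}

theorem MeasureTheory.IsStoppingTime.piecewise_of_ge [Preorder ι] {𝒢 : Filtration ι m0}
    {θ τ η : Ω → WithTop ι} (hθ : IsStoppingTime 𝒢 θ) (hτ : IsStoppingTime 𝒢 τ)
    (hη : IsStoppingTime 𝒢 η) (hθτ : θ ≤ τ) (hθη : θ ≤ η) {s : Set Ω} [DecidablePred (· ∈ s)]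
    (hs : MeasurableSet[hθ.measurableSpace] s) : IsStoppingTime 𝒢 (s.piecewise τ η) := by
  intro i
  have hset : {ω | s.piecewise τ η ω ≤ i}
      = s ∩ {ω | θ ω ≤ i} ∩ {ω | τ ω ≤ i} ∪ sᶜ ∩ {ω | θ ω ≤ i} ∩ {ω | η ω ≤ i} := by
    ext ω
    by_cases hω : ω ∈ s
    · simpa [hω] using fun h => (hθτ ω).trans h
    · simpa [hω] using fun h => (hθη ω).trans h
  rw [hset]
  exact ((((hθ.measurableSet s).1 hs).2 i).inter (hτ i)).union
    ((((hθ.measurableSet sᶜ).1 hs.compl).2 i).inter (hη i))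

theorem MeasureTheory.IsStoppingTime.measurableSpace_le_of_ae_eq [LinearOrder ι]
    {𝒢 : Filtration ι m0} {μ : Measure Ω} {i₀ : ι} (hnull : ∀ s, μ s = 0 → MeasurableSet[𝒢 i₀] s)
    {θ τ : Ω → WithTop ι} (hθ : IsStoppingTime 𝒢 θ) (hτ : IsStoppingTime 𝒢 τ)
    (hτ₀ : ∀ ω, (i₀ : WithTop ι) ≤ τ ω) (h : θ =ᵐ[μ] τ) :
    hθ.measurableSpace ≤ hτ.measurableSpace := by
  intro s hs
  refine (hτ.measurableSet s).2 ⟨((hθ.measurableSet s).1 hs).1, fun i => ?_⟩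
  rcases lt_or_ge i i₀ with hi | hi
  · convert @MeasurableSet.empty _ (𝒢 i)
    refine Set.eq_empty_of_forall_notMem fun ω hω => ?_
    exact (WithTop.coe_lt_coe.2 hi).not_ge ((hτ₀ ω).trans hω.2)
  · set N := {ω | θ ω ≠ τ ω}
    have hN : μ N = 0 := h
    have hset : s ∩ {ω | τ ω ≤ i} = s ∩ {ω | θ ω ≤ i} ∩ Nᶜ ∪ s ∩ {ω | τ ω ≤ i} ∩ N := by
      ext ω
      by_cases hω : θ ω = τ ω <;> simp [N, hω]
    rw [hset]
    exact ((((hθ.measurableSet s).1 hs).2 i).inter (𝒢.mono hi _ (hnull N hN).compl)).union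
      (𝒢.mono hi _ (hnull _ (measure_mono_null Set.inter_subset_right hN)))

end StoppingTime

section MemT0

variable {m0 : MeasurableSpace Ω} {𝓕 : Filtration ℝ m0} {T : ℝ} {θ τ σ : Ω → ℝ}

lemma MemT0.max (hτ : MemT0 𝓕 T τ) (hσ : MemT0 𝓕 T σ) :
    MemT0 𝓕 T fun ω => max (τ ω) (σ ω) :=
  ⟨hτ.1.max hσ.1, fun ω => ⟨le_max_of_le_left (hτ.2 ω).1, max_le (hτ.2 ω).2 (hσ.2 ω).2⟩⟩

lemma MemT0.min (hτ : MemT0 𝓕 T τ) (hσ : MemT0 𝓕 T σ) :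
    MemT0 𝓕 T fun ω => min (τ ω) (σ ω) :=
  ⟨hτ.1.min hσ.1, fun ω => ⟨le_min (hτ.2 ω).1 (hσ.2 ω).1, min_le_of_left_le (hτ.2 ω).2⟩⟩

lemma MemT0.piecewise (hθ : MemT0 𝓕 T θ) (hτ : MemT0 𝓕 T τ) (hσ : MemT0 𝓕 T σ)
    (hθτ : ∀ ω, θ ω ≤ τ ω) (hθσ : ∀ ω, θ ω ≤ σ ω) {s : Set Ω} [DecidablePred (· ∈ s)]
    (hs : MeasurableSet[hθ.1.measurableSpace] s) : MemT0 𝓕 T (s.piecewise τ σ) := by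
  refine ⟨?_, fun ω => ?_⟩
  · have h := hθ.1.piecewise_of_ge hτ.1 hσ.1 (fun ω => WithTop.coe_le_coe.2 (hθτ ω))
      (fun ω => WithTop.coe_le_coe.2 (hθσ ω)) hs
    convert h using 2 with ω
    by_cases hω : ω ∈ s <;> simp [hω]
  · by_cases hω : ω ∈ s <;> simp [hω, hτ.2 ω, hσ.2 ω]

lemma MemT0.measurableSet_le_min (hτ : MemT0 𝓕 T τ) (hσ : MemT0 𝓕 T σ) :
    MeasurableSet[(hτ.min hσ).1.measurableSpace] {ω | σ ω ≤ τ ω} :=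
  (IsStoppingTime.measurableSet_min_iff hτ.1 hσ.1 _).2
    ⟨by simpa using IsStoppingTime.measurableSet_stopping_time_le hσ.1 hτ.1,
      by simpa using IsStoppingTime.measurableSet_le_stopping_time hσ.1 hτ.1⟩

end MemT0

/-- The one-stopping value `ess sup_{τ ∈ T_θ} E[Y τ | F_θ]`; the paper's `u₁ θ` and `u₂ θ` are
the cases `Y = ψ(·, θ)` and `Y = ψ(θ, ·)`. -/
def IsStoppingValue {m0 : MeasurableSpace Ω} (μ : Measure Ω) {𝓕 : Filtration ℝ m0} {T : ℝ}
    {θ : Ω → ℝ} (hθ : MemT0 𝓕 T θ) (Y : (Ω → ℝ) → Ω → ℝ) (u : Ω → ℝ) : Prop :=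
  IsEssSupFam μ (fun τ => MemT0 𝓕 T τ ∧ θ ≤ᵐ[μ] τ) (fun τ => μ[Y τ | hθ.1.measurableSpace]) u

section StoppingValue

variable {m0 : MeasurableSpace Ω} {μ : Measure Ω} {𝓕 : Filtration ℝ m0} {T : ℝ} {θ : Ω → ℝ}
  {Y : (Ω → ℝ) → Ω → ℝ}

lemma exists_condExp_ge_both (hθ : MemT0 𝓕 T θ)
    (hY : ∀ τ τ', MemT0 𝓕 T τ → MemT0 𝓕 T τ' → ∀ᵐ ω ∂μ, τ ω = τ' ω → Y τ ω = Y τ' ω)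
    (hYi : ∀ τ, MemT0 𝓕 T τ → Integrable (Y τ) μ) {τ σ : Ω → ℝ}
    (hτ : MemT0 𝓕 T τ ∧ ∀ ω, θ ω ≤ τ ω) (hσ : MemT0 𝓕 T σ ∧ ∀ ω, θ ω ≤ σ ω) :
    ∃ κ, (MemT0 𝓕 T κ ∧ ∀ ω, θ ω ≤ κ ω) ∧
      μ[Y τ|hθ.1.measurableSpace] ≤ᵐ[μ] μ[Y κ|hθ.1.measurableSpace] ∧
      μ[Y σ|hθ.1.measurableSpace] ≤ᵐ[μ] μ[Y κ|hθ.1.measurableSpace] := by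
  classical
  set A := {ω | μ[Y τ|hθ.1.measurableSpace] ω ≤ μ[Y σ|hθ.1.measurableSpace] ω}
  have hA : MeasurableSet[hθ.1.measurableSpace] A :=
    measurableSet_le stronglyMeasurable_condExp.measurable stronglyMeasurable_condExp.measurable
  have hκ := hθ.piecewise hσ.1 hτ.1 hσ.2 hτ.2 hA
  have hpaste : μ[Y (A.piecewise σ τ)|hθ.1.measurableSpace]
      =ᵐ[μ] A.piecewise (μ[Y σ|hθ.1.measurableSpace]) (μ[Y τ|hθ.1.measurableSpace]) := by
    refine condExp_ae_eq_piecewise (hYi _ hκ) (hYi σ hσ.1) (hYi τ hτ.1) hA ?_ ?_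
    · filter_upwards [hY _ σ hκ hσ.1] with ω h hω using h (by simp [hω])
    · filter_upwards [hY _ τ hκ hτ.1] with ω h hω using h (by simp [hω])
  have hmax : ∀ ω, A.piecewise (μ[Y σ|hθ.1.measurableSpace]) (μ[Y τ|hθ.1.measurableSpace]) ω
      = max (μ[Y τ|hθ.1.measurableSpace] ω) (μ[Y σ|hθ.1.measurableSpace] ω) := fun ω => by
    by_cases hω : ω ∈ A
    · have hle : μ[Y τ|hθ.1.measurableSpace] ω ≤ μ[Y σ|hθ.1.measurableSpace] ω := hω
      simp [hω, max_eq_right hle]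
    · have hlt : μ[Y σ|hθ.1.measurableSpace] ω < μ[Y τ|hθ.1.measurableSpace] ω := not_le.1 hω
      simp [hω, max_eq_left hlt.le]
  refine ⟨A.piecewise σ τ, ⟨hκ, Set.le_piecewise (fun ω _ => hσ.2 ω) (fun ω _ => hτ.2 ω)⟩, ?_, ?_⟩
  · filter_upwards [hpaste] with ω h
    exact h ▸ hmax ω ▸ le_max_left _ _
  · filter_upwards [hpaste] with ω h
    exact h ▸ hmax ω ▸ le_max_right _ _

lemma IsStoppingValue.exists_monotone_tendsto {hθ : MemT0 𝓕 T θ}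
    {u : Ω → ℝ} (hu : IsStoppingValue μ hθ Y u) (hui : Integrable u μ)
    (hY : ∀ τ τ', MemT0 𝓕 T τ → MemT0 𝓕 T τ' → ∀ᵐ ω ∂μ, τ ω = τ' ω → Y τ ω = Y τ' ω)
    (hYi : ∀ τ, MemT0 𝓕 T τ → Integrable (Y τ) μ) :
    ∃ τn : ℕ → Ω → ℝ, (∀ n, MemT0 𝓕 T (τn n) ∧ ∀ ω, θ ω ≤ τn n ω) ∧
      ∀ᵐ ω ∂μ, Monotone (fun n => μ[Y (τn n)|hθ.1.measurableSpace] ω) ∧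
        Tendsto (fun n => μ[Y (τn n)|hθ.1.measurableSpace] ω) atTop (𝓝 (u ω)) := by
  have hu' : IsEssSupFam μ (fun τ => MemT0 𝓕 T τ ∧ ∀ ω, θ ω ≤ τ ω)
      (fun τ => μ[Y τ|hθ.1.measurableSpace]) u := by
    refine hu.of_cofinal (fun τ ⟨hτ, hθτ⟩ => ⟨_, ⟨hθ.max hτ, fun ω => le_max_left _ _⟩, ?_⟩)
      (fun τ ⟨hτ, hθτ⟩ => ⟨τ, ⟨hτ, ae_of_all _ hθτ⟩, EventuallyLE.rfl⟩)
    refine (condExp_congr_ae ?_).le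
    filter_upwards [hY τ _ hτ (hθ.max hτ), hθτ] with ω h h' using h (max_eq_right h').symm
  exact hu'.exists_monotone_tendsto hui ⟨θ, hθ, fun _ => le_rfl⟩ (fun _ _ => integrable_condExp)
    fun τ σ hτ hσ => exists_condExp_ge_both hθ hY hYi hτ hσ

lemma IsStoppingValue.ae_eq_of_ae_eq (hnull : ∀ s, μ s = 0 → MeasurableSet[𝓕 0] s)
    {θ' : Ω → ℝ} {hθ : MemT0 𝓕 T θ} {hθ' : MemT0 𝓕 T θ'} {Y' : (Ω → ℝ) → Ω → ℝ}
    {u u' : Ω → ℝ} (hu : IsStoppingValue μ hθ Y u) (hu' : IsStoppingValue μ hθ' Y' u')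
    (h : θ =ᵐ[μ] θ') (hY : ∀ τ, MemT0 𝓕 T τ → Y τ =ᵐ[μ] Y' τ) : u =ᵐ[μ] u' := by
  have hF : hθ.1.measurableSpace = hθ'.1.measurableSpace :=
    le_antisymm
      (hθ.1.measurableSpace_le_of_ae_eq hnull hθ'.1 (fun ω => WithTop.coe_le_coe.2 (hθ'.2 ω).1)
        (h.fun_comp _))
      (hθ'.1.measurableSpace_le_of_ae_eq hnull hθ.1 (fun ω => WithTop.coe_le_coe.2 (hθ.2 ω).1)
        (h.symm.fun_comp _))
  refine IsEssSupFam.ae_eq (hu.of_cofinal (fun τ ⟨hτ, hθτ⟩ => ⟨τ, ⟨hτ, h.symm.trans_le hθτ⟩, ?_⟩)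
    (fun τ ⟨hτ, hθτ⟩ => ⟨τ, ⟨hτ, h.trans_le hθτ⟩, ?_⟩)) hu'
  · rw [hF]; exact (condExp_congr_ae (hY τ hτ)).le
  · rw [hF]; exact (condExp_congr_ae (hY τ hτ)).symm.le

end StoppingValue

section Reduction

variable {m0 : MeasurableSpace Ω} {μ : Measure Ω} {𝓕 : Filtration ℝ m0} {T : ℝ}
  {ψ : (Ω → ℝ) → (Ω → ℝ) → Ω → ℝ}

lemma condExp_le_max_stoppingValue_min (hψ : Biadmissible 𝓕 T μ ψ)
    (hψint : ∀ τ₁ τ₂, MemT0 𝓕 T τ₁ → MemT0 𝓕 T τ₂ → Integrable (ψ τ₁ τ₂) μ)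
    {τ₁ τ₂ : Ω → ℝ} (hτ₁ : MemT0 𝓕 T τ₁) (hτ₂ : MemT0 𝓕 T τ₂) {u₁ u₂ : Ω → ℝ}
    (hu₁ : IsStoppingValue μ (hτ₁.min hτ₂) (fun τ => ψ τ fun ω => min (τ₁ ω) (τ₂ ω)) u₁)
    (hu₂ : IsStoppingValue μ (hτ₁.min hτ₂) (ψ fun ω => min (τ₁ ω) (τ₂ ω)) u₂) :
    μ[ψ τ₁ τ₂|(hτ₁.min hτ₂).1.measurableSpace] ≤ᵐ[μ] fun ω => max (u₁ ω) (u₂ ω) := by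
  classical
  set θ := fun ω => min (τ₁ ω) (τ₂ ω)
  have hθ : MemT0 𝓕 T θ := hτ₁.min hτ₂
  set A := {ω | τ₂ ω ≤ τ₁ ω}
  have hpaste : μ[ψ τ₁ τ₂|hθ.1.measurableSpace] =ᵐ[μ]
      A.piecewise (μ[ψ τ₁ θ|hθ.1.measurableSpace]) (μ[ψ θ τ₂|hθ.1.measurableSpace]) := by
    refine condExp_ae_eq_piecewise (hψint _ _ hτ₁ hτ₂) (hψint _ _ hτ₁ hθ) (hψint _ _ hθ hτ₂)
      (hτ₁.measurableSet_le_min hτ₂) ?_ ?_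
    · filter_upwards [hψ.2 τ₁ τ₁ τ₂ θ hτ₁ hτ₁ hτ₂ hθ] with ω h hω
      exact h rfl (min_eq_right hω).symm
    · filter_upwards [hψ.2 τ₁ θ τ₂ τ₂ hτ₁ hθ hτ₂ hτ₂] with ω h hω
      exact h (min_eq_left (not_le.1 hω).le).symm rfl
  filter_upwards [hpaste, hu₁.1 τ₁ ⟨hτ₁, ae_of_all _ fun ω => min_le_left _ _⟩,
    hu₂.1 τ₂ ⟨hτ₂, ae_of_all _ fun ω => min_le_right _ _⟩] with ω h h₁ h₂
  rw [h]
  by_cases hω : ω ∈ A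
  · simpa [hω] using le_max_of_le_left h₁
  · simpa [hω] using le_max_of_le_right h₂

lemma condExp_piecewise_piecewise_ae_eq (hψ : Biadmissible 𝓕 T μ ψ)
    (hψint : ∀ τ₁ τ₂, MemT0 𝓕 T τ₁ → MemT0 𝓕 T τ₂ → Integrable (ψ τ₁ τ₂) μ)
    {θ τ σ : Ω → ℝ} (hθ : MemT0 𝓕 T θ) (hτ : MemT0 𝓕 T τ) (hσ : MemT0 𝓕 T σ)
    (hθτ : ∀ ω, θ ω ≤ τ ω) (hθσ : ∀ ω, θ ω ≤ σ ω) {A : Set Ω} [DecidablePred (· ∈ A)]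
    (hA : MeasurableSet[hθ.1.measurableSpace] A) :
    μ[ψ (A.piecewise τ θ) (A.piecewise θ σ)|hθ.1.measurableSpace]
      =ᵐ[μ] A.piecewise (μ[ψ τ θ|hθ.1.measurableSpace]) (μ[ψ θ σ|hθ.1.measurableSpace]) := by
  have hρ := hθ.piecewise hτ hθ hθτ (fun _ => le_rfl) hA
  have hρ' := hθ.piecewise hθ hσ (fun _ => le_rfl) hθσ hA
  refine condExp_ae_eq_piecewise (hψint _ _ hρ hρ') (hψint _ _ hτ hθ) (hψint _ _ hθ hσ) hA ?_ ?_
  · filter_upwards [hψ.2 _ _ _ _ hρ hτ hρ' hθ] with ω h hω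
    exact h (by simp [hω]) (by simp [hω])
  · filter_upwards [hψ.2 _ _ _ _ hρ hθ hρ' hσ] with ω h hω
    exact h (by simp [hω]) (by simp [hω])

lemma exists_seq_condExp_tendsto_max_stoppingValue [IsFiniteMeasure μ]
    (hψ : Biadmissible 𝓕 T μ ψ)
    (hψint : ∀ τ₁ τ₂, MemT0 𝓕 T τ₁ → MemT0 𝓕 T τ₂ → Integrable (ψ τ₁ τ₂) μ)
    {θ : Ω → ℝ} (hθ : MemT0 𝓕 T θ) {u₁ u₂ : Ω → ℝ}
    (hu₁ : IsStoppingValue μ hθ (fun τ => ψ τ θ) u₁) (hu₂ : IsStoppingValue μ hθ (ψ θ) u₂)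
    (hu₁i : Integrable u₁ μ) (hu₂i : Integrable u₂ μ) :
    ∃ ρ ρ' : ℕ → Ω → ℝ,
      (∀ n, MemT0 𝓕 T (ρ n) ∧ MemT0 𝓕 T (ρ' n) ∧ (∀ ω, θ ω ≤ ρ n ω) ∧ ∀ ω, θ ω ≤ ρ' n ω) ∧
      (∀ n, μ[ψ (ρ n) (ρ' n)|hθ.1.measurableSpace] ≤ᵐ[μ] fun ω => max (u₁ ω) (u₂ ω)) ∧
      ∀ᵐ ω ∂μ, Tendsto (fun n => μ[ψ (ρ n) (ρ' n)|hθ.1.measurableSpace] ω) atTop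
        (𝓝 (max (u₁ ω) (u₂ ω))) := by
  classical
  have hm := hθ.1.measurableSpace_le
  have : SigmaFinite (μ.trim hm) := (isFiniteMeasure_trim hm).toSigmaFinite
  obtain ⟨τn, hτn, hτlim⟩ := hu₁.exists_monotone_tendsto hu₁i
    (fun τ τ' hτ hτ' => (hψ.2 τ τ' θ θ hτ hτ' hθ hθ).mono fun ω h e => h e rfl)
    (fun τ hτ => hψint τ θ hτ hθ)
  obtain ⟨σn, hσn, hσlim⟩ := hu₂.exists_monotone_tendsto hu₂i
    (fun τ τ' hτ hτ' => (hψ.2 θ θ τ τ' hθ hθ hτ hτ').mono fun ω h e => h rfl e)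
    (fun τ hτ => hψint θ τ hθ hτ)
  -- stop `ψ(·, θ)` optimally where `u₁ ≥ u₂`, and `ψ(θ, ·)` elsewhere
  obtain ⟨A, hA, hAu⟩ := exists_measurableSet_ae_ge_on_le_off
    (hu₁.aestronglyMeasurable hm hu₁i (fun _ _ => stronglyMeasurable_condExp)
      (fun _ _ => integrable_condExp))
    (hu₂.aestronglyMeasurable hm hu₂i (fun _ _ => stronglyMeasurable_condExp)
      (fun _ _ => integrable_condExp))
  have hρ n := hθ.piecewise (hτn n).1 hθ (hτn n).2 (fun _ => le_rfl) hA
  have hρ' n := hθ.piecewise hθ (hσn n).1 (fun _ => le_rfl) (hσn n).2 hA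
  have hpaste n := condExp_piecewise_piecewise_ae_eq hψ hψint hθ (hτn n).1 (hσn n).1 (hτn n).2
    (hσn n).2 hA
  refine ⟨fun n => A.piecewise (τn n) θ, fun n => A.piecewise θ (σn n),
    fun n => ⟨hρ n, hρ' n, Set.le_piecewise (fun ω _ => (hτn n).2 ω) (fun _ _ => le_rfl),
      Set.le_piecewise (fun _ _ => le_rfl) (fun ω _ => (hσn n).2 ω)⟩, fun n => ?_, ?_⟩
  · filter_upwards [hpaste n, hu₁.1 (τn n) ⟨(hτn n).1, ae_of_all _ (hτn n).2⟩,
      hu₂.1 (σn n) ⟨(hσn n).1, ae_of_all _ (hσn n).2⟩] with ω h h₁ h₂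
    rw [h]
    by_cases hω : ω ∈ A
    · simpa [hω] using le_max_of_le_left h₁
    · simpa [hω] using le_max_of_le_right h₂
  · filter_upwards [ae_all_iff.2 hpaste, hAu, hτlim, hσlim] with ω h hAu h₁ h₂
    simp_rw [h]
    by_cases hω : ω ∈ A
    · simpa [hω, max_eq_left (hAu.1 hω)] using h₁.2
    · simpa [hω, max_eq_right (hAu.2 hω)] using h₂.2

lemma condExp_le_of_isEssSupFam_max_stoppingValue [IsFiniteMeasure μ]
    {u₁ u₂ : (Ω → ℝ) → Ω → ℝ} {S : Ω → ℝ}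
    (hψ : Biadmissible 𝓕 T μ ψ)
    (hψint : ∀ τ₁ τ₂, MemT0 𝓕 T τ₁ → MemT0 𝓕 T τ₂ → Integrable (ψ τ₁ τ₂) μ)
    (hu₁ : ∀ θ (hθ : MemT0 𝓕 T θ), IsStoppingValue μ hθ (fun τ => ψ τ θ) (u₁ θ))
    (hu₂ : ∀ θ (hθ : MemT0 𝓕 T θ), IsStoppingValue μ hθ (ψ θ) (u₂ θ))
    (hu₁int : ∀ θ, MemT0 𝓕 T θ → Integrable (u₁ θ) μ)
    (hu₂int : ∀ θ, MemT0 𝓕 T θ → Integrable (u₂ θ) μ) (hS : MemT0 𝓕 T S) {uS : Ω → ℝ}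
    (huS : IsEssSupFam μ (fun θ => MemT0 𝓕 T θ ∧ S ≤ᵐ[μ] θ)
      (fun θ => μ[fun ω => max (u₁ θ ω) (u₂ θ ω) | hS.1.measurableSpace]) uS)
    {τ₁ τ₂ : Ω → ℝ} (hτ₁ : MemT0 𝓕 T τ₁) (hτ₂ : MemT0 𝓕 T τ₂) (hSτ₁ : S ≤ᵐ[μ] τ₁)
    (hSτ₂ : S ≤ᵐ[μ] τ₂) :
    μ[ψ τ₁ τ₂|hS.1.measurableSpace] ≤ᵐ[μ] uS := by
  set τ₁' := fun ω => max (S ω) (τ₁ ω)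
  set τ₂' := fun ω => max (S ω) (τ₂ ω)
  set θ := fun ω => min (τ₁' ω) (τ₂' ω)
  have hτ₁' : MemT0 𝓕 T τ₁' := hS.max hτ₁
  have hτ₂' : MemT0 𝓕 T τ₂' := hS.max hτ₂
  have hθ : MemT0 𝓕 T θ := hτ₁'.min hτ₂'
  have hmθ := hθ.1.measurableSpace_le
  have : SigmaFinite (μ.trim hmθ) := (isFiniteMeasure_trim hmθ).toSigmaFinite
  have hSθ : ∀ ω, S ω ≤ θ ω := fun ω => le_min (le_max_left _ _) (le_max_left _ _)
  have hψeq : ψ τ₁ τ₂ =ᵐ[μ] ψ τ₁' τ₂' := by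
    filter_upwards [hψ.2 _ _ _ _ hτ₁ hτ₁' hτ₂ hτ₂', hSτ₁, hSτ₂] with ω h h₁ h₂
    exact h (max_eq_right h₁).symm (max_eq_right h₂).symm
  calc μ[ψ τ₁ τ₂|hS.1.measurableSpace]
      =ᵐ[μ] μ[μ[ψ τ₁' τ₂'|hθ.1.measurableSpace]|hS.1.measurableSpace] :=
        (condExp_congr_ae hψeq).trans (condExp_condExp_of_le
          (hS.1.measurableSpace_mono hθ.1 fun ω => WithTop.coe_le_coe.2 (hSθ ω)) hmθ).symm
    _ ≤ᵐ[μ] μ[fun ω => max (u₁ θ ω) (u₂ θ ω)|hS.1.measurableSpace] :=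
        condExp_mono integrable_condExp ((hu₁int θ hθ).sup (hu₂int θ hθ))
          (condExp_le_max_stoppingValue_min hψ hψint hτ₁' hτ₂' (hu₁ θ hθ) (hu₂ θ hθ))
    _ ≤ᵐ[μ] uS := huS.1 θ ⟨hθ, ae_of_all _ hSθ⟩

lemma condExp_max_stoppingValue_le_of_isEssSupFam [IsFiniteMeasure μ]
    {u₁ u₂ : (Ω → ℝ) → Ω → ℝ} {S : Ω → ℝ}
    (hnull : ∀ A : Set Ω, μ A = 0 → MeasurableSet[𝓕 0] A) (hψ : Biadmissible 𝓕 T μ ψ)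
    (hψint : ∀ τ₁ τ₂, MemT0 𝓕 T τ₁ → MemT0 𝓕 T τ₂ → Integrable (ψ τ₁ τ₂) μ)
    (hu₁ : ∀ θ (hθ : MemT0 𝓕 T θ), IsStoppingValue μ hθ (fun τ => ψ τ θ) (u₁ θ))
    (hu₂ : ∀ θ (hθ : MemT0 𝓕 T θ), IsStoppingValue μ hθ (ψ θ) (u₂ θ))
    (hu₁int : ∀ θ, MemT0 𝓕 T θ → Integrable (u₁ θ) μ)
    (hu₂int : ∀ θ, MemT0 𝓕 T θ → Integrable (u₂ θ) μ) (hS : MemT0 𝓕 T S) {vS : Ω → ℝ}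
    (hvS : IsEssSupFam μ
      (fun p : (Ω → ℝ) × (Ω → ℝ) =>
        MemT0 𝓕 T p.1 ∧ MemT0 𝓕 T p.2 ∧ S ≤ᵐ[μ] p.1 ∧ S ≤ᵐ[μ] p.2)
      (fun p => μ[ψ p.1 p.2 | hS.1.measurableSpace]) vS)
    {θ₀ : Ω → ℝ} (hθ₀ : MemT0 𝓕 T θ₀) (hSθ₀ : S ≤ᵐ[μ] θ₀) :
    μ[fun ω => max (u₁ θ₀ ω) (u₂ θ₀ ω)|hS.1.measurableSpace] ≤ᵐ[μ] vS := by
  set θ := fun ω => max (S ω) (θ₀ ω)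
  have hθ : MemT0 𝓕 T θ := hS.max hθ₀
  have hθeq : θ₀ =ᵐ[μ] θ := hSθ₀.mono fun ω h => (max_eq_right h).symm
  have hmS := hS.1.measurableSpace_le
  have : SigmaFinite (μ.trim hmS) := (isFiniteMeasure_trim hmS).toSigmaFinite
  have hSθ : hS.1.measurableSpace ≤ hθ.1.measurableSpace :=
    hS.1.measurableSpace_mono hθ.1 fun ω => WithTop.coe_le_coe.2 (le_max_left _ _)
  have h₁ : u₁ θ₀ =ᵐ[μ] u₁ θ := (hu₁ θ₀ hθ₀).ae_eq_of_ae_eq hnull (hu₁ θ hθ) hθeq fun τ hτ => by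
    filter_upwards [hψ.2 τ τ θ₀ θ hτ hτ hθ₀ hθ, hθeq] with ω h e using h rfl e
  have h₂ : u₂ θ₀ =ᵐ[μ] u₂ θ := (hu₂ θ₀ hθ₀).ae_eq_of_ae_eq hnull (hu₂ θ hθ) hθeq fun τ hτ => by
    filter_upwards [hψ.2 θ₀ θ τ τ hθ₀ hθ hτ hτ, hθeq] with ω h e using h e rfl
  obtain ⟨ρ, ρ', hρ, hle, hlim⟩ := exists_seq_condExp_tendsto_max_stoppingValue hψ hψint hθ
    (hu₁ θ hθ) (hu₂ θ hθ) (hu₁int θ hθ) (hu₂int θ hθ)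
  refine (condExp_congr_ae (h₁.comp₂ max h₂)).trans_le
    (condExp_ae_le_of_tendsto_of_dominated hmS _ (fun n => integrable_condExp.1)
      ((hu₁int θ hθ).sup (hu₂int θ hθ)) (fun n => ?_) hlim fun n => ?_)
  · filter_upwards [hle n, condExp_nonneg (m := hθ.1.measurableSpace)
      (ae_of_all μ (hψ.1 _ _ (hρ n).1 (hρ n).2.1).2)] with ω h h₀
    rwa [Real.norm_eq_abs, abs_of_nonneg h₀]
  · obtain ⟨hρn, hρ'n, hθρ, hθρ'⟩ := hρ n
    exact (condExp_condExp_of_le hSθ hθ.1.measurableSpace_le).trans_le (hvS.1 (ρ n, ρ' n)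
      ⟨hρn, hρ'n, ae_of_all _ fun ω => (le_max_left _ _).trans (hθρ ω),
        ae_of_all _ fun ω => (le_max_left _ _).trans (hθρ' ω)⟩)

end Reduction

theorem reduction_theorem_general
    {m0 : MeasurableSpace Ω} (μ : Measure Ω) [IsProbabilityMeasure μ]
    (𝓕 : Filtration ℝ m0) (T : ℝ)
    (hFnull : ∀ A : Set Ω, μ A = 0 → MeasurableSet[𝓕 0] A)
    (ψ : (Ω → ℝ) → (Ω → ℝ) → Ω → ℝ)
    (hψ : Biadmissible 𝓕 T μ ψ)
    (hψint : ∀ τ₁ τ₂, MemT0 𝓕 T τ₁ → MemT0 𝓕 T τ₂ → Integrable (ψ τ₁ τ₂) μ)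
    (u₁ u₂ : (Ω → ℝ) → Ω → ℝ)
    (hu₁ : ∀ θ (hθ : MemT0 𝓕 T θ),
      IsEssSupFam μ (fun τ => MemT0 𝓕 T τ ∧ θ ≤ᵐ[μ] τ)
        (fun τ => μ[ψ τ θ | hθ.1.measurableSpace]) (u₁ θ))
    (hu₂ : ∀ θ (hθ : MemT0 𝓕 T θ),
      IsEssSupFam μ (fun τ => MemT0 𝓕 T τ ∧ θ ≤ᵐ[μ] τ)
        (fun τ => μ[ψ θ τ | hθ.1.measurableSpace]) (u₂ θ))
    (hu₁int : ∀ θ, MemT0 𝓕 T θ → Integrable (u₁ θ) μ)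
    (hu₂int : ∀ θ, MemT0 𝓕 T θ → Integrable (u₂ θ) μ) :
    ∀ S (hS : MemT0 𝓕 T S), ∀ vS uS : Ω → ℝ,
      IsEssSupFam μ
        (fun p : (Ω → ℝ) × (Ω → ℝ) =>
          MemT0 𝓕 T p.1 ∧ MemT0 𝓕 T p.2 ∧ S ≤ᵐ[μ] p.1 ∧ S ≤ᵐ[μ] p.2)
        (fun p => μ[ψ p.1 p.2 | hS.1.measurableSpace]) vS →
      IsEssSupFam μ (fun θ => MemT0 𝓕 T θ ∧ S ≤ᵐ[μ] θ)
        (fun θ => μ[fun ω => max (u₁ θ ω) (u₂ θ ω) | hS.1.measurableSpace]) uS →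
      vS =ᵐ[μ] uS := by
  intro S hS vS uS hvS huS
  refine (hvS.2 uS ?_).antisymm (huS.2 vS ?_)
  · rintro ⟨τ₁, τ₂⟩ ⟨hτ₁, hτ₂, hSτ₁, hSτ₂⟩
    exact condExp_le_of_isEssSupFam_max_stoppingValue hψ hψint hu₁ hu₂ hu₁int hu₂int hS huS
      hτ₁ hτ₂ hSτ₁ hSτ₂
  · rintro θ ⟨hθ, hSθ⟩
    exact condExp_max_stoppingValue_le_of_isEssSupFam hFnull hψ hψint hu₁ hu₂ hu₁int hu₂int hS
      hvS hθ hSθ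

/-- (Reduction theorem) For a biadmissible family `ψ` of
nonnegative integrable random variables, with `u₁, u₂` the one-stopping value
families and `φ(θ) = max(u₁(θ), u₂(θ))`, the double-stopping value function
`v(S) = ess sup_{τ₁,τ₂ ∈ T_S} E[ψ(τ₁,τ₂) | F_S]` coincides a.s. with the
single-stopping value function `u(S) = ess sup_{θ ∈ T_S} E[φ(θ) | F_S]`. -/
theorem reduction_theorem
    {m0 : MeasurableSpace Ω} (μ : Measure Ω) [IsProbabilityMeasure μ]
    (𝓕 : Filtration ℝ m0) (T : ℝ) (hT : 0 ≤ T)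
    (hFright : ∀ t : ℝ, 𝓕 t = ⨅ s ∈ Set.Ioi t, 𝓕 s)
    (hFnull : ∀ A : Set Ω, μ A = 0 → MeasurableSet[𝓕 0] A)
    (ψ : (Ω → ℝ) → (Ω → ℝ) → Ω → ℝ)
    (hψ : Biadmissible 𝓕 T μ ψ)
    (hψint : ∀ τ₁ τ₂, MemT0 𝓕 T τ₁ → MemT0 𝓕 T τ₂ → Integrable (ψ τ₁ τ₂) μ)
    (u₁ u₂ : (Ω → ℝ) → Ω → ℝ)
    (hu₁ : ∀ θ (hθ : MemT0 𝓕 T θ),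
      IsEssSupFam μ (fun τ => MemT0 𝓕 T τ ∧ θ ≤ᵐ[μ] τ)
        (fun τ => μ[ψ τ θ | hθ.1.measurableSpace]) (u₁ θ))
    (hu₂ : ∀ θ (hθ : MemT0 𝓕 T θ),
      IsEssSupFam μ (fun τ => MemT0 𝓕 T τ ∧ θ ≤ᵐ[μ] τ)
        (fun τ => μ[ψ θ τ | hθ.1.measurableSpace]) (u₂ θ))
    (hu₁int : ∀ θ, MemT0 𝓕 T θ → Integrable (u₁ θ) μ)
    (hu₂int : ∀ θ, MemT0 𝓕 T θ → Integrable (u₂ θ) μ) :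
    ∀ S (hS : MemT0 𝓕 T S), ∀ vS uS : Ω → ℝ,
      IsEssSupFam μ
        (fun p : (Ω → ℝ) × (Ω → ℝ) =>
          MemT0 𝓕 T p.1 ∧ MemT0 𝓕 T p.2 ∧ S ≤ᵐ[μ] p.1 ∧ S ≤ᵐ[μ] p.2)
        (fun p => μ[ψ p.1 p.2 | hS.1.measurableSpace]) vS →
      IsEssSupFam μ (fun θ => MemT0 𝓕 T θ ∧ S ≤ᵐ[μ] θ)
        (fun θ => μ[fun ω => max (u₁ θ ω) (u₂ θ ω) | hS.1.measurableSpace]) uS →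
      vS =ᵐ[μ] uS :=
  reduction_theorem_general μ 𝓕 T hFnull ψ hψ hψint u₁ u₂ hu₁ hu₂ hu₁int hu₂int
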